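/- The map sending a clique C of the CRAN-IDNC graph to its induced schedule (τ_C, κ_C, r_C) — where τ_C(b, z) = {u : ∃ f, r with (b, z, u, f, r) ∈ C}, κ_C(b, z) = {f : ∃ u, r with (b, z, u, f, r) ∈ C}, and r_C(b, z) is the common rate of the vertices of C at (b, z) when τ_C(b, z) ≠ ∅ — is a bijection between the set of cliques of the CRAN-IDNC graph and the set of feasible schedules, and it preserves value: the weight of each clique equals the throughput of its induced schedule. -/

import Mathlib

/-- A vertex of the CRAN-IDNC graph: a tuple (b, z, u, f, r). -/
structure CV (B Z U F : Type*) where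
  b : B
  z : Z
  u : U
  f : F
  r : ℝ


noncomputable instance {B Z U F : Type*} : DecidableEq (CV B Z U F) :=
  Classical.decEq _

variable {B Z U F : Type*}

/-- `v` is a valid vertex: `f ∈ W(u)`, `r ∈ R`, and `r ≤ cap(b, z, u)`. -/
def IsVertex (W : U → Finset F) (Rset : Finset ℝ) (cap : B → Z → U → ℝ)
    (v : CV B Z U F) : Prop :=
  v.f ∈ W v.u ∧ v.r ∈ Rset ∧ v.r ≤ cap v.b v.z v.u

/-- Adjacency in the CRAN-IDNC graph. -/
def Adj (H : U → Finset F) (v v' : CV B Z U F) : Prop :=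
  v ≠ v' ∧
    (((v.b, v.z) = (v'.b, v'.z) ∧
        ((v.f = v'.f ∨ (v.f ∈ H v'.u ∧ v'.f ∈ H v.u)) ∧ v.r = v'.r)) ∨
      ((v.b, v.z) ≠ (v'.b, v'.z) ∧
        ((v.u = v'.u ∧ v.b = v'.b) ∨
          (v.b = v'.b ∧ (v.f = v'.f ∨ (v.f ∈ H v'.u ∧ v'.f ∈ H v.u))) ∨
          v.u ≠ v'.u)))

/-- A clique of the CRAN-IDNC graph: a finite set of valid vertices that are
pairwise adjacent. -/
def IsClique (H W : U → Finset F) (Rset : Finset ℝ) (cap : B → Z → U → ℝ)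
    (C : Finset (CV B Z U F)) : Prop :=
  (∀ v ∈ C, IsVertex W Rset cap v) ∧
    ∀ v ∈ C, ∀ v' ∈ C, v ≠ v' → Adj H v v'

/-- A schedule: a targeted user set and a file combination for each resource
block `(b, z)`, together with a transmission rate that is defined exactly on
the resource blocks with a nonempty targeted user set. -/
structure Sched (B Z U F : Type*) where
  τ : B → Z → Finset U
  κ : B → Z → Finset F
  rate : B → Z → Option ℝ

/-- Feasibility of a schedule: the rate is defined (and lies in `Rset`) exactly
on the blocks with nonempty targeted user set; (i) each user is served by at
most one RRH; (ii) the combination `κ (b, z)` contains exactly one wanted file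
of each targeted user and all its other files are in that user's Has set;
(iii) the rate does not exceed the capacity of any targeted user; and (iv) the
combination consists exactly of the wanted files of the targeted users. -/
def FeasibleSched [DecidableEq F] (H W : U → Finset F) (Rset : Finset ℝ)
    (cap : B → Z → U → ℝ) (S : Sched B Z U F) : Prop :=
  (∀ b z, ((S.τ b z).Nonempty → ∃ x ∈ Rset, S.rate b z = some x) ∧
    (¬ (S.τ b z).Nonempty → S.rate b z = none)) ∧
  (∀ b z b' z' u, u ∈ S.τ b z → u ∈ S.τ b' z' → b = b') ∧
  (∀ b z u, u ∈ S.τ b z → ∃ f, S.κ b z ∩ W u = {f} ∧ S.κ b z \ {f} ⊆ H u) ∧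
  (∀ b z u x, u ∈ S.τ b z → S.rate b z = some x → x ≤ cap b z u) ∧
  (∀ b z, S.κ b z = (S.τ b z).biUnion fun u => S.κ b z ∩ W u)

/-- The throughput of a schedule: the sum, over the resource blocks with a
nonempty targeted user set, of the number of targeted users times the rate. -/
noncomputable def schedThroughput [Fintype B] [Fintype Z]
    (S : Sched B Z U F) : ℝ :=
  ∑ p ∈ Finset.univ.filter (fun p : B × Z => (S.τ p.1 p.2).Nonempty),
    ((S.τ p.1 p.2).card : ℝ) * (S.rate p.1 p.2).getD 0

/-- The set of users targeted at resource block `(b, z)` by the clique `C`. -/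
def cliqueTau [DecidableEq B] [DecidableEq Z] [DecidableEq U]
    (C : Finset (CV B Z U F)) (b : B) (z : Z) : Finset U :=
  (C.filter fun v => v.b = b ∧ v.z = z).image CV.u

/-- The file combination scheduled at resource block `(b, z)` by the clique `C`. -/
def cliqueKappa [DecidableEq B] [DecidableEq Z] [DecidableEq F]
    (C : Finset (CV B Z U F)) (b : B) (z : Z) : Finset F :=
  (C.filter fun v => v.b = b ∧ v.z = z).image CV.f

/-- The common rate of the vertices of the clique `C` at resource block
`(b, z)` (defined exactly when `C` has a vertex there). -/
noncomputable def cliqueRate [DecidableEq B] [DecidableEq Z]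
    (C : Finset (CV B Z U F)) (b : B) (z : Z) : Option ℝ :=
  if h : (C.filter fun v => v.b = b ∧ v.z = z).Nonempty then some h.choose.r
  else none


/-!
A clique meets each resource block `(b, z)` in vertices of one common rate (LC2) whose files
pairwise satisfy the IDNC condition (LC1); since Has and Wants sets are disjoint, LC1 forces
two vertices of the same user at the same block to carry the same file, so a clique has at
most one vertex per `(b, z, u)` and is recovered from its schedule as the set of vertices
`(b, z, u, f, r)` with `u ∈ τ(b, z)`, `f ∈ κ(b, z) ∩ W(u)` and `r = r(b, z)`. Conversely this
set is a clique for every feasible schedule, and GC1–GC3 across blocks amount to (i).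
Counting the vertices of a clique block by block gives `|τ(b, z)|` vertices of weight
`r(b, z)`, which is the throughput.
-/

attribute [ext] CV Sched

section CliqueSchedule

variable {H W : U → Finset F} {Rset : Finset ℝ} {cap : B → Z → U → ℝ}

def Sched.HasVertex [DecidableEq F] (W : U → Finset F) (S : Sched B Z U F)
    (v : CV B Z U F) : Prop :=
  v.u ∈ S.τ v.b v.z ∧ v.f ∈ S.κ v.b v.z ∩ W v.u ∧ S.rate v.b v.z = some v.r

section Clique

variable {C : Finset (CV B Z U F)} {v v' : CV B Z U F}

theorem IsClique.rate_eq (hC : IsClique H W Rset cap C) (hv : v ∈ C) (hv' : v' ∈ C)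
    (hb : v.b = v'.b) (hz : v.z = v'.z) : v.r = v'.r := by
  by_cases h : v = v'
  · rw [h]
  · rcases (hC.2 v hv v' hv' h).2 with ⟨_, _, hr⟩ | ⟨hne, _⟩
    · exact hr
    · exact absurd (by rw [hb, hz]) hne

theorem IsClique.b_eq_of_u_eq (hC : IsClique H W Rset cap C) (hv : v ∈ C) (hv' : v' ∈ C)
    (hu : v.u = v'.u) : v.b = v'.b := by
  by_cases h : v = v'
  · rw [h]
  · rcases (hC.2 v hv v' hv' h).2 with ⟨hp, _⟩ | ⟨_, ⟨_, hb⟩ | ⟨hb, _⟩ | hne⟩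
    · exact congrArg Prod.fst hp
    · exact hb
    · exact hb
    · exact absurd hu hne

theorem IsClique.f_eq_or_mem_has (hC : IsClique H W Rset cap C) (hv : v ∈ C) (hv' : v' ∈ C)
    (hb : v'.b = v.b) (hz : v'.z = v.z) : v'.f = v.f ∨ v'.f ∈ H v.u := by
  by_cases h : v' = v
  · exact Or.inl (by rw [h])
  · rcases (hC.2 v' hv' v hv h).2 with ⟨_, hf, _⟩ | ⟨hne, _⟩
    · exact hf.imp_right And.left
    · exact absurd (by rw [hb, hz]) hne

theorem IsClique.f_eq_of_mem_wants (hDisj : ∀ u, Disjoint (H u) (W u))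
    (hC : IsClique H W Rset cap C) (hv : v ∈ C) (hv' : v' ∈ C)
    (hb : v'.b = v.b) (hz : v'.z = v.z) (hW : v'.f ∈ W v.u) : v'.f = v.f :=
  (hC.f_eq_or_mem_has hv hv' hb hz).resolve_right
    fun hH => Finset.disjoint_left.mp (hDisj v.u) hH hW

theorem IsClique.eq_of_block_eq_of_u_eq (hDisj : ∀ u, Disjoint (H u) (W u))
    (hC : IsClique H W Rset cap C) (hv : v ∈ C) (hv' : v' ∈ C)
    (hb : v'.b = v.b) (hz : v'.z = v.z) (hu : v'.u = v.u) : v' = v :=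
  CV.ext hb hz hu (hC.f_eq_of_mem_wants hDisj hv hv' hb hz (hu ▸ (hC.1 v' hv').1))
    (hC.rate_eq hv' hv hb hz)

section Induced

variable [DecidableEq B] [DecidableEq Z]

theorem mem_cliqueTau [DecidableEq U] {b : B} {z : Z} {u : U} :
    u ∈ cliqueTau C b z ↔ ∃ v ∈ C, v.b = b ∧ v.z = z ∧ v.u = u := by
  simp [cliqueTau, and_assoc]

theorem mem_cliqueKappa [DecidableEq F] {b : B} {z : Z} {f : F} :
    f ∈ cliqueKappa C b z ↔ ∃ v ∈ C, v.b = b ∧ v.z = z ∧ v.f = f := by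
  simp [cliqueKappa, and_assoc]

theorem cliqueRate_eq_none {b : B} {z : Z}
    (h : ∀ v ∈ C, v.b = b → v.z = z → False) : cliqueRate C b z = none :=
  dif_neg fun ⟨v, hv⟩ => by
    rw [Finset.mem_filter] at hv
    exact h v hv.1 hv.2.1 hv.2.2

theorem IsClique.cliqueRate_eq (hC : IsClique H W Rset cap C) (hv : v ∈ C) :
    cliqueRate C v.b v.z = some v.r := by
  have hne : (C.filter fun w => w.b = v.b ∧ w.z = v.z).Nonempty :=
    ⟨v, Finset.mem_filter.mpr ⟨hv, rfl, rfl⟩⟩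
  obtain ⟨hw, hb, hz⟩ := Finset.mem_filter.mp hne.choose_spec
  rw [cliqueRate, dif_pos hne, hC.rate_eq hw hv hb hz]

theorem IsClique.cliqueKappa_inter_wants (hDisj : ∀ u, Disjoint (H u) (W u))
    [DecidableEq F] (hC : IsClique H W Rset cap C) (hv : v ∈ C) :
    cliqueKappa C v.b v.z ∩ W v.u = {v.f} := by
  ext g
  simp only [Finset.mem_inter, mem_cliqueKappa, Finset.mem_singleton]
  constructor
  · rintro ⟨⟨v', hv', hb, hz, rfl⟩, hW⟩
    exact hC.f_eq_of_mem_wants hDisj hv hv' hb hz hW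
  · rintro rfl
    exact ⟨⟨v, hv, rfl, rfl, rfl⟩, (hC.1 v hv).1⟩

theorem IsClique.cliqueKappa_sdiff_subset_has [DecidableEq F] (hC : IsClique H W Rset cap C)
    (hv : v ∈ C) : cliqueKappa C v.b v.z \ {v.f} ⊆ H v.u := by
  intro g hg
  rw [Finset.mem_sdiff, Finset.mem_singleton, mem_cliqueKappa] at hg
  obtain ⟨⟨v', hv', hb, hz, rfl⟩, hne⟩ := hg
  exact (hC.f_eq_or_mem_has hv hv' hb hz).resolve_left hne

variable [DecidableEq U] [DecidableEq F]

/-- The schedule `(τ_C, κ_C, r_C)` induced by a clique `C`. -/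
noncomputable def cliqueSched (C : Finset (CV B Z U F)) : Sched B Z U F :=
  ⟨cliqueTau C, cliqueKappa C, cliqueRate C⟩

theorem IsClique.feasibleSched_cliqueSched (hDisj : ∀ u, Disjoint (H u) (W u))
    (hC : IsClique H W Rset cap C) : FeasibleSched H W Rset cap (cliqueSched C) := by
  refine ⟨fun b z => ⟨?_, fun hne => ?_⟩, ?_, ?_, ?_, fun b z => ?_⟩
  · rintro ⟨u, hu⟩
    obtain ⟨v, hv, rfl, rfl, -⟩ := mem_cliqueTau.mp hu
    exact ⟨v.r, (hC.1 v hv).2.1, hC.cliqueRate_eq hv⟩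
  · exact cliqueRate_eq_none fun v hv hb hz =>
      hne ⟨v.u, mem_cliqueTau.mpr ⟨v, hv, hb, hz, rfl⟩⟩
  · intro b z b' z' u hu hu'
    obtain ⟨v, hv, rfl, rfl, rfl⟩ := mem_cliqueTau.mp hu
    obtain ⟨v', hv', rfl, rfl, hvu'⟩ := mem_cliqueTau.mp hu'
    exact hC.b_eq_of_u_eq hv hv' hvu'.symm
  · intro b z u hu
    obtain ⟨v, hv, rfl, rfl, rfl⟩ := mem_cliqueTau.mp hu
    exact ⟨v.f, hC.cliqueKappa_inter_wants hDisj hv, hC.cliqueKappa_sdiff_subset_has hv⟩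
  · intro b z u x hu hx
    obtain ⟨v, hv, rfl, rfl, rfl⟩ := mem_cliqueTau.mp hu
    obtain rfl : v.r = x := Option.some_injective _ ((hC.cliqueRate_eq hv).symm.trans hx)
    exact (hC.1 v hv).2.2
  · refine subset_antisymm (fun f hf => ?_)
      (Finset.biUnion_subset.mpr fun _ _ => Finset.inter_subset_left)
    obtain ⟨v, hv, rfl, rfl, rfl⟩ := mem_cliqueKappa.mp hf
    refine Finset.mem_biUnion.mpr ⟨v.u, mem_cliqueTau.mpr ⟨v, hv, rfl, rfl, rfl⟩, ?_⟩
    exact Finset.mem_inter.mpr ⟨hf, (hC.1 v hv).1⟩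

theorem IsClique.mem_iff_hasVertex (hDisj : ∀ u, Disjoint (H u) (W u))
    (hC : IsClique H W Rset cap C) : v ∈ C ↔ (cliqueSched C).HasVertex W v := by
  constructor
  · intro hv
    refine ⟨mem_cliqueTau.mpr ⟨v, hv, rfl, rfl, rfl⟩, ?_, hC.cliqueRate_eq hv⟩
    rw [cliqueSched, hC.cliqueKappa_inter_wants hDisj hv]
    exact Finset.mem_singleton_self _
  · rintro ⟨hu, hf, hr⟩
    obtain ⟨v', hv', hb, hz, hu'⟩ := mem_cliqueTau.mp hu
    have hv'_eq : v' = v := by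
      have hκ := hC.cliqueKappa_inter_wants hDisj hv'
      have hrate := hC.cliqueRate_eq hv'
      rw [hb, hz, hu'] at hκ
      rw [hb, hz] at hrate
      refine CV.ext hb hz hu' ?_ (Option.some_injective _ (hrate.symm.trans hr))
      exact (Finset.mem_singleton.mp (hκ ▸ hf)).symm
    exact hv'_eq ▸ hv'

end Induced

end Clique

section Schedule

variable [DecidableEq F] {S : Sched B Z U F} {b : B} {z : Z} {u : U} {f g : F}

theorem FeasibleSched.exists_rate (hS : FeasibleSched H W Rset cap S) (hu : u ∈ S.τ b z) :
    ∃ x ∈ Rset, S.rate b z = some x :=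
  (hS.1 b z).1 ⟨u, hu⟩

theorem FeasibleSched.exists_mem_inter_wants (hS : FeasibleSched H W Rset cap S)
    (hu : u ∈ S.τ b z) : ∃ f, f ∈ S.κ b z ∩ W u := by
  obtain ⟨f, hf, -⟩ := hS.2.2.1 b z u hu
  exact ⟨f, hf ▸ Finset.mem_singleton_self f⟩

theorem FeasibleSched.mem_has_of_ne (hS : FeasibleSched H W Rset cap S) (hu : u ∈ S.τ b z)
    (hf : f ∈ S.κ b z ∩ W u) (hg : g ∈ S.κ b z) (hne : g ≠ f) : g ∈ H u := by
  obtain ⟨f', hf', hsub⟩ := hS.2.2.1 b z u hu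
  obtain rfl : f = f' := Finset.mem_singleton.mp (hf' ▸ hf)
  exact hsub (Finset.mem_sdiff.mpr ⟨hg, Finset.notMem_singleton.mpr hne⟩)

variable [Fintype B] [Fintype Z]

noncomputable def Sched.toClique (W : U → Finset F) (S : Sched B Z U F) :
    Finset (CV B Z U F) :=
  Finset.univ.biUnion fun p : B × Z =>
    (S.τ p.1 p.2).biUnion fun u =>
      (S.κ p.1 p.2 ∩ W u).biUnion fun f =>
        (S.rate p.1 p.2).toFinset.image fun r => ⟨p.1, p.2, u, f, r⟩

theorem Sched.mem_toClique {v : CV B Z U F} : v ∈ S.toClique W ↔ S.HasVertex W v := by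
  obtain ⟨b, z, u, f, r⟩ := v
  simp only [Sched.toClique, Sched.HasVertex, Finset.mem_biUnion, Finset.mem_univ, true_and,
    Finset.mem_image, Option.mem_toFinset, Option.mem_def]
  constructor
  · rintro ⟨_, _, hu, _, hf, _, hr, ⟨⟩⟩
    exact ⟨hu, hf, hr⟩
  · rintro ⟨hu, hf, hr⟩
    exact ⟨(b, z), u, hu, f, hf, r, hr, rfl⟩

theorem FeasibleSched.isClique_toClique (hS : FeasibleSched H W Rset cap S) :
    IsClique H W Rset cap (S.toClique W) := by
  refine ⟨fun v hv => ?_, fun v hv v' hv' hne => ⟨hne, ?_⟩⟩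
  · obtain ⟨hu, hf, hr⟩ := Sched.mem_toClique.mp hv
    obtain ⟨x, hx, hxr⟩ := hS.exists_rate hu
    obtain rfl : x = v.r := Option.some_injective _ (hxr.symm.trans hr)
    exact ⟨(Finset.mem_inter.mp hf).2, hx, hS.2.2.2.1 _ _ _ _ hu hr⟩
  obtain ⟨hu, hf, hr⟩ := Sched.mem_toClique.mp hv
  obtain ⟨hu', hf', hr'⟩ := Sched.mem_toClique.mp hv'
  by_cases hp : (v.b, v.z) = (v'.b, v'.z)
  · obtain ⟨hb, hz⟩ := Prod.ext_iff.mp hp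
    dsimp only at hb hz
    rw [hb, hz] at hu hf hr
    refine Or.inl ⟨hp, ?_, Option.some_injective _ (hr.symm.trans hr')⟩
    by_cases hff : v.f = v'.f
    · exact Or.inl hff
    · exact Or.inr ⟨hS.mem_has_of_ne hu' hf' (Finset.mem_inter.mp hf).1 hff,
        hS.mem_has_of_ne hu hf (Finset.mem_inter.mp hf').1 (Ne.symm hff)⟩
  · refine Or.inr ⟨hp, ?_⟩
    by_cases huu : v.u = v'.u
    · exact Or.inl ⟨huu, hS.2.1 _ _ _ _ _ hu (huu ▸ hu')⟩
    · exact Or.inr (Or.inr huu)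

variable [DecidableEq B] [DecidableEq Z]

theorem FeasibleSched.cliqueKappa_toClique (hS : FeasibleSched H W Rset cap S)
    (b : B) (z : Z) :
    cliqueKappa (S.toClique W) b z = S.κ b z := by
  ext f
  rw [mem_cliqueKappa]
  constructor
  · rintro ⟨v, hv, rfl, rfl, rfl⟩
    exact (Finset.mem_inter.mp (Sched.mem_toClique.mp hv).2.1).1
  · intro hf
    obtain ⟨u, hu, hfu⟩ := Finset.mem_biUnion.mp (hS.2.2.2.2 b z ▸ hf)
    obtain ⟨x, -, hx⟩ := hS.exists_rate hu
    exact ⟨⟨b, z, u, f, x⟩, Sched.mem_toClique.mpr ⟨hu, hfu, hx⟩, rfl, rfl, rfl⟩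

theorem FeasibleSched.cliqueRate_toClique (hS : FeasibleSched H W Rset cap S)
    (b : B) (z : Z) :
    cliqueRate (S.toClique W) b z = S.rate b z := by
  by_cases hne : (S.τ b z).Nonempty
  · obtain ⟨u, hu⟩ := hne
    obtain ⟨f, hf⟩ := hS.exists_mem_inter_wants hu
    obtain ⟨x, -, hx⟩ := hS.exists_rate hu
    have hv : (⟨b, z, u, f, x⟩ : CV B Z U F) ∈ S.toClique W :=
      Sched.mem_toClique.mpr ⟨hu, hf, hx⟩
    rw [hS.isClique_toClique.cliqueRate_eq hv, hx]
  · rw [(hS.1 b z).2 hne]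
    refine cliqueRate_eq_none fun v hv hb hz => hne ⟨v.u, ?_⟩
    exact hb ▸ hz ▸ (Sched.mem_toClique.mp hv).1

variable [DecidableEq U]

theorem FeasibleSched.cliqueTau_toClique (hS : FeasibleSched H W Rset cap S)
    (b : B) (z : Z) :
    cliqueTau (S.toClique W) b z = S.τ b z := by
  ext u
  rw [mem_cliqueTau]
  constructor
  · rintro ⟨v, hv, rfl, rfl, rfl⟩
    exact (Sched.mem_toClique.mp hv).1
  · intro hu
    obtain ⟨f, hf⟩ := hS.exists_mem_inter_wants hu
    obtain ⟨x, -, hx⟩ := hS.exists_rate hu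
    exact ⟨⟨b, z, u, f, x⟩, Sched.mem_toClique.mpr ⟨hu, hf, hx⟩, rfl, rfl, rfl⟩

theorem FeasibleSched.cliqueSched_toClique (hS : FeasibleSched H W Rset cap S) :
    cliqueSched (S.toClique W) = S := by
  ext b z : 3
  exacts [hS.cliqueTau_toClique b z, hS.cliqueKappa_toClique b z, hS.cliqueRate_toClique b z]

end Schedule

section Weight

variable [DecidableEq B] [DecidableEq Z] [DecidableEq U] {C : Finset (CV B Z U F)}

theorem IsClique.sum_rate_filter_block (hDisj : ∀ u, Disjoint (H u) (W u))
    (hC : IsClique H W Rset cap C) (b : B) (z : Z) :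
    ∑ v ∈ C with v.b = b ∧ v.z = z, v.r =
      (cliqueTau C b z).card * (cliqueRate C b z).getD 0 := by
  have hcard : (cliqueTau C b z).card = (C.filter fun v => v.b = b ∧ v.z = z).card :=
    Finset.card_image_of_injOn fun v hv v' hv' hu => by
      obtain ⟨hvC, hb, hz⟩ := Finset.mem_filter.mp hv
      obtain ⟨hv'C, hb', hz'⟩ := Finset.mem_filter.mp hv'
      exact hC.eq_of_block_eq_of_u_eq hDisj hv'C hvC (hb.trans hb'.symm) (hz.trans hz'.symm) hu
  have hrate : ∀ v ∈ C.filter fun v => v.b = b ∧ v.z = z,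
      v.r = (cliqueRate C b z).getD 0 := by
    intro v hv
    obtain ⟨hvC, rfl, rfl⟩ := Finset.mem_filter.mp hv
    rw [hC.cliqueRate_eq hvC, Option.getD_some]
  rw [Finset.sum_congr rfl hrate, Finset.sum_const, nsmul_eq_mul, hcard]

variable [DecidableEq F] [Fintype B] [Fintype Z]

theorem IsClique.sum_rate_eq_schedThroughput (hDisj : ∀ u, Disjoint (H u) (W u))
    (hC : IsClique H W Rset cap C) : ∑ v ∈ C, v.r = schedThroughput (cliqueSched C) := by
  calc ∑ v ∈ C, v.r = ∑ p : B × Z, ∑ v ∈ C with (v.b, v.z) = p, v.r :=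
        (Finset.sum_fiberwise C _ _).symm
    _ = ∑ p : B × Z, (cliqueTau C p.1 p.2).card * (cliqueRate C p.1 p.2).getD 0 := by
        refine Finset.sum_congr rfl fun p _ => ?_
        simp only [Prod.ext_iff]
        exact hC.sum_rate_filter_block hDisj p.1 p.2
    _ = schedThroughput (cliqueSched C) := by
        refine (Finset.sum_filter_of_ne fun p _ hp => ?_).symm
        have hcard : ((cliqueTau C p.1 p.2).card : ℝ) ≠ 0 := left_ne_zero_of_mul hp
        exact Finset.card_ne_zero.mp (Nat.cast_ne_zero.mp hcard)

end Weight

end CliqueSchedule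

theorem clique_schedule_bijection_general {B Z U F : Type*}
    [Fintype B] [Fintype Z]
    [DecidableEq B] [DecidableEq Z] [DecidableEq U] [DecidableEq F]
    (H W : U → Finset F) (Rset : Finset ℝ) (cap : B → Z → U → ℝ)
    (hDisj : ∀ u, Disjoint (H u) (W u)) :
    ∃ e : {C : Finset (CV B Z U F) // IsClique H W Rset cap C} ≃
        {S : Sched B Z U F // FeasibleSched H W Rset cap S},
      (∀ C, (e C).1.τ = cliqueTau C.1 ∧ (e C).1.κ = cliqueKappa C.1 ∧
        (e C).1.rate = cliqueRate C.1) ∧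
      ∀ C, ∑ v ∈ C.1, v.r = schedThroughput (e C).1 := by
  refine ⟨⟨fun C => ⟨cliqueSched C.1, C.2.feasibleSched_cliqueSched hDisj⟩,
    fun S => ⟨S.1.toClique W, S.2.isClique_toClique⟩, fun C => ?_, fun S => ?_⟩,
    fun C => ⟨rfl, rfl, rfl⟩, fun C => C.2.sum_rate_eq_schedThroughput hDisj⟩
  · ext v
    exact Sched.mem_toClique.trans (C.2.mem_iff_hasVertex hDisj).symm
  · exact Subtype.ext S.2.cliqueSched_toClique

/-- The map sending a clique of the CRAN-IDNC graph to its induced schedule is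
a bijection onto the set of feasible schedules, and the weight of each clique
equals the throughput of its induced schedule. -/
theorem clique_schedule_bijection {B Z U F : Type*}
    [Fintype B] [Fintype Z] [Fintype U] [Fintype F]
    [DecidableEq B] [DecidableEq Z] [DecidableEq U] [DecidableEq F]
    (H W : U → Finset F) (Rset : Finset ℝ) (cap : B → Z → U → ℝ)
    (hDisj : ∀ u, Disjoint (H u) (W u)) (hRpos : ∀ r ∈ Rset, 0 < r) :
    ∃ e : {C : Finset (CV B Z U F) // IsClique H W Rset cap C} ≃
        {S : Sched B Z U F // FeasibleSched H W Rset cap S},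
      (∀ C, (e C).1.τ = cliqueTau C.1 ∧ (e C).1.κ = cliqueKappa C.1 ∧
        (e C).1.rate = cliqueRate C.1) ∧
      ∀ C, ∑ v ∈ C.1, v.r = schedThroughput (e C).1 :=
  clique_schedule_bijection_general H W Rset cap hDisj
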